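/- Let α > 0 be a real number, s ∈ ℕ, and let H ⊆ {1,…,s}² with |H| ≥ s² − α·s. Then the number of edges of the integer lattice graph with one endpoint in H and the other endpoint in ℤ²∖H is at most 4·(1+α)·s. -/

import Mathlib

/-!
An edge from `H` to its complement either leaves the box `{1,…,s}²`, which has only `4s`
outgoing edges, or ends at one of the at most `αs` points of the box missing from `H`, each of
which has only four lattice neighbours.
-/

open Filter Topology

noncomputable section

/-- Adjacency in the integer lattice graph: Euclidean distance exactly `1`. -/
def latticeAdj (p q : ℤ × ℤ) : Prop :=
  Real.sqrt (((p.1 - q.1 : ℤ) : ℝ)^2 + ((p.2 - q.2 : ℤ) : ℝ)^2) = 1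

lemma latticeAdj_symm {p q : ℤ × ℤ} (h : latticeAdj p q) : latticeAdj q p := by
  unfold latticeAdj at h ⊢
  have : (((q.1 - p.1 : ℤ) : ℝ)^2 + ((q.2 - p.2 : ℤ) : ℝ)^2)
      = (((p.1 - q.1 : ℤ) : ℝ)^2 + ((p.2 - q.2 : ℤ) : ℝ)^2) := by push_cast; ring
  rw [this]; exact h

lemma latticeAdj_irrefl (p : ℤ × ℤ) : ¬ latticeAdj p p := by
  unfold latticeAdj
  simp

/-- The integer lattice graph `ℤ²`. -/
def latticeGraph : SimpleGraph (ℤ × ℤ) where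
  Adj p q := latticeAdj p q
  symm := ⟨fun _ _ h => latticeAdj_symm h⟩
  loopless := ⟨latticeAdj_irrefl⟩

/-- `e(A, Aᶜ)`: the number of lattice edges with one endpoint in `A` and the other
outside `A` (counted as ordered pairs whose first coordinate lies in `A`, which counts
each such edge exactly once). -/
def eBnd (A : Set (ℤ × ℤ)) : ℕ :=
  Set.ncard {e : (ℤ × ℤ) × (ℤ × ℤ) | e.1 ∈ A ∧ e.2 ∉ A ∧ latticeAdj e.1 e.2}


/-- The vertex set `{1,…,s}²` of the `s × s` grid, as a subset of `ℤ²`. -/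
def gridBox (s : ℕ) : Set (ℤ × ℤ) := Set.Icc (1 : ℤ) s ×ˢ Set.Icc (1 : ℤ) s

def unitSteps : Finset (ℤ × ℤ) := {(1, 0), (-1, 0), (0, 1), (0, -1)}

lemma Int.eq_unit_of_sq_add_sq_eq_one {a b : ℤ} (h : a ^ 2 + b ^ 2 = 1) :
    (a = 1 ∧ b = 0) ∨ (a = -1 ∧ b = 0) ∨ (a = 0 ∧ b = 1) ∨ (a = 0 ∧ b = -1) := by
  have ha : |a| ≤ 1 := (sq_le_one_iff_abs_le_one _).mp (by nlinarith [sq_nonneg b])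
  have hb : |b| ≤ 1 := (sq_le_one_iff_abs_le_one _).mp (by nlinarith [sq_nonneg a])
  rw [abs_le] at ha hb
  obtain ⟨ha₁, ha₂⟩ := ha
  obtain ⟨hb₁, hb₂⟩ := hb
  interval_cases a <;> interval_cases b <;> simp_all

lemma sub_mem_unitSteps_of_latticeAdj {p q : ℤ × ℤ} (h : latticeAdj p q) : q - p ∈ unitSteps := by
  have hdist : (p.1 - q.1) ^ 2 + (p.2 - q.2) ^ 2 = 1 := by exact_mod_cast Real.sqrt_eq_one.mp h
  have hsq : (q.1 - p.1) ^ 2 + (q.2 - p.2) ^ 2 = 1 := by rw [← hdist]; ring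
  simp only [unitSteps, Finset.mem_insert, Finset.mem_singleton, Prod.ext_iff, Prod.fst_sub,
    Prod.snd_sub]
  exact Int.eq_unit_of_sq_add_sq_eq_one hsq

def edgesFrom (S : Set (ℤ × ℤ)) : Set ((ℤ × ℤ) × (ℤ × ℤ)) :=
  {e | e.1 ∈ S ∧ latticeAdj e.1 e.2}

lemma edgesFrom_subset_image (S : Set (ℤ × ℤ)) :
    edgesFrom S ⊆ (fun x => (x.1, x.1 + x.2)) '' (S ×ˢ unitSteps) :=
  fun e he => ⟨(e.1, e.2 - e.1), ⟨he.1, sub_mem_unitSteps_of_latticeAdj he.2⟩, by simp⟩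

lemma Set.Finite.edgesFrom {S : Set (ℤ × ℤ)} (hS : S.Finite) : (edgesFrom S).Finite :=
  ((hS.prod unitSteps.finite_toSet).image _).subset (edgesFrom_subset_image S)

lemma ncard_edgesFrom_le {S : Set (ℤ × ℤ)} (hS : S.Finite) :
    (edgesFrom S).ncard ≤ 4 * S.ncard :=
  calc (edgesFrom S).ncard
      ≤ ((fun x => (x.1, x.1 + x.2)) '' (S ×ˢ (unitSteps : Set (ℤ × ℤ)))).ncard :=
        Set.ncard_le_ncard (edgesFrom_subset_image S) ((hS.prod unitSteps.finite_toSet).image _)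
    _ ≤ (S ×ˢ (unitSteps : Set (ℤ × ℤ))).ncard :=
        Set.ncard_image_le (hS.prod unitSteps.finite_toSet)
    _ = 4 * S.ncard := by rw [Set.ncard_prod, Set.ncard_coe_finset, mul_comm]; rfl

lemma eBnd_le_of_subset {H B : Set (ℤ × ℤ)} (hHB : H ⊆ B) (hB : B.Finite) :
    eBnd H ≤ eBnd B + 4 * (B \ H).ncard := by
  set boundaryB := {e : (ℤ × ℤ) × (ℤ × ℤ) | e.1 ∈ B ∧ e.2 ∉ B ∧ latticeAdj e.1 e.2}
  have hsplit : {e : (ℤ × ℤ) × (ℤ × ℤ) | e.1 ∈ H ∧ e.2 ∉ H ∧ latticeAdj e.1 e.2} ⊆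
      boundaryB ∪ Prod.swap '' edgesFrom (B \ H) := by
    rintro e ⟨hp, hq, hadj⟩
    by_cases hqB : e.2 ∈ B
    · right
      rw [Set.image_swap_eq_preimage_swap]
      exact ⟨⟨hqB, hq⟩, latticeAdj_symm hadj⟩
    · exact .inl ⟨hHB hp, hqB, hadj⟩
  have hfinB : boundaryB.Finite := hB.edgesFrom.subset fun e he => ⟨he.1, he.2.2⟩
  have hfinBH : (edgesFrom (B \ H)).Finite := (hB.subset Set.sdiff_subset).edgesFrom
  calc eBnd H ≤ (boundaryB ∪ Prod.swap '' edgesFrom (B \ H)).ncard :=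
        Set.ncard_le_ncard hsplit (hfinB.union (hfinBH.image _))
    _ ≤ boundaryB.ncard + (Prod.swap '' edgesFrom (B \ H)).ncard := Set.ncard_union_le _ _
    _ = eBnd B + (edgesFrom (B \ H)).ncard := by
        rw [Set.ncard_image_of_injective _ Prod.swap_injective]; rfl
    _ ≤ eBnd B + 4 * (B \ H).ncard :=
        Nat.add_le_add_left (ncard_edgesFrom_le (hB.subset Set.sdiff_subset)) _

lemma eBnd_gridBox_le (s : ℕ) : eBnd (gridBox s) ≤ 4 * s := by
  set I := Finset.Icc (1 : ℤ) s
  let exits : Finset ((ℤ × ℤ) × (ℤ × ℤ)) :=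
    I.image (fun b => ((s, b), (s + 1, b))) ∪ I.image (fun b => ((1, b), (0, b))) ∪
      I.image (fun a => ((a, s), (a, s + 1))) ∪ I.image (fun a => ((a, 1), (a, 0)))
  have hsub : {e : (ℤ × ℤ) × (ℤ × ℤ) | e.1 ∈ gridBox s ∧ e.2 ∉ gridBox s ∧
      latticeAdj e.1 e.2} ⊆ exits := by
    rintro ⟨⟨a, b⟩, ⟨c, d⟩⟩ ⟨hp, hq, hadj⟩
    have hstep := sub_mem_unitSteps_of_latticeAdj hadj
    simp only [gridBox, Set.mem_prod, Set.mem_Icc] at hp hq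
    simp only [unitSteps, Finset.mem_insert, Finset.mem_singleton, Prod.mk_sub_mk,
      Prod.ext_iff] at hstep
    simp only [exits, I, Finset.coe_union, Finset.coe_image, Finset.coe_Icc, Set.mem_union,
      Set.mem_image, Set.mem_Icc, Prod.ext_iff]
    rcases hstep with h | h | h | h
    · exact .inl (.inl (.inl ⟨b, by omega⟩))
    · exact .inl (.inl (.inr ⟨b, by omega⟩))
    · exact .inl (.inr ⟨a, by omega⟩)
    · exact .inr ⟨a, by omega⟩
  calc eBnd (gridBox s) ≤ exits.card := by
        rw [eBnd, ← Set.ncard_coe_finset]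
        exact Set.ncard_le_ncard hsub exits.finite_toSet
    _ ≤ I.card + I.card + I.card + I.card := by
        refine (Finset.card_union_le _ _).trans (add_le_add ?_ Finset.card_image_le)
        refine (Finset.card_union_le _ _).trans (add_le_add ?_ Finset.card_image_le)
        exact (Finset.card_union_le _ _).trans (add_le_add Finset.card_image_le Finset.card_image_le)
    _ = 4 * s := by rw [Int.card_Icc]; omega

lemma gridBox_finite (s : ℕ) : (gridBox s).Finite :=
  (Set.finite_Icc _ _).prod (Set.finite_Icc _ _)

lemma ncard_gridBox (s : ℕ) : (gridBox s).ncard = s ^ 2 := by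
  rw [gridBox, Set.ncard_prod]
  simp [Set.ncard_eq_toFinset_card', sq]

theorem edge_boundary_upper_bound_general (α : ℝ) (s : ℕ)
    (H : Set (ℤ × ℤ)) (hHsub : H ⊆ gridBox s) (hHcard : (s : ℝ)^2 - α * s ≤ (H.ncard : ℝ)) :
    (eBnd H : ℝ) ≤ 4 * (1 + α) * s := by
  have hbound : eBnd H ≤ 4 * s + 4 * (gridBox s \ H).ncard :=
    (eBnd_le_of_subset hHsub (gridBox_finite s)).trans (Nat.add_le_add_right (eBnd_gridBox_le s) _)
  have hcomplement : (gridBox s \ H).ncard + H.ncard = s ^ 2 := by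
    rw [Set.ncard_sdiff_add_ncard_of_subset hHsub (gridBox_finite s), ncard_gridBox]
  have hboundR : (eBnd H : ℝ) ≤ 4 * s + 4 * (gridBox s \ H).ncard := by exact_mod_cast hbound
  have hcomplementR : ((gridBox s \ H).ncard : ℝ) + H.ncard = s ^ 2 := by
    exact_mod_cast hcomplement
  linarith

/-- If `H ⊆ {1,…,s}²` has `|H| ≥ s² − αs`, then the number of lattice
edges between `H` and its complement in `ℤ²` is at most `4·(1+α)·s`. -/
theorem edge_boundary_upper_bound (α : ℝ) (hα : 0 < α) (s : ℕ)
    (H : Set (ℤ × ℤ)) (hHsub : H ⊆ gridBox s) (hHcard : (s : ℝ)^2 - α * s ≤ (H.ncard : ℝ)) :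
    (eBnd H : ℝ) ≤ 4 * (1 + α) * s :=
  edge_boundary_upper_bound_general α s H hHsub hHcard

end
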